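/- arXiv:1704.08478 — 3 statements merged into one kernel-verified Lean document; each statement's English description precedes it below -/
import Mathlib

section
/- Let l₁, l₂, l₃ be three lines (rank-2 flats) in a matroid that are pairwise coplanar (i.e., rk(lᵢ ∪ lⱼ) ≤ 3 for all i ≠ j) but not all lying in a common plane (rk(l₁ ∪ l₂ ∪ l₃) = 4). If l₁ and l₂ intersect in a point p (a rank-1 flat contained in both), then p is also contained in l₃. -/
open Set

namespace StickyKantor

variable {α : Type*}

/-- The rank of a set in a matroid, as an integer (junk value `0` when infinite). -/
noncomputable def rk (M : Matroid α) (X : Set α) : ℤ :=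
  ((⨆ I ∈ {I : Set α | M.Indep I ∧ I ⊆ X}, I.encard).toNat : ℤ)

/-- The modular defect of a pair of sets. -/
noncomputable def mdefect (M : Matroid α) (X Y : Set α) : ℤ :=
  rk M X + rk M Y - rk M (X ∪ Y) - rk M (X ∩ Y)

/-- A modular pair of sets. -/
def ModularPair (M : Matroid α) (X Y : Set α) : Prop :=
  rk M X + rk M Y = rk M (X ∪ Y) + rk M (X ∩ Y)

/-- `M'` is an extension of `M`: it has a larger ground set and restricts to `M`. -/
def IsExtension (M' M : Matroid α) : Prop :=
  M.E ⊆ M'.E ∧ M = M'.restrict M.E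

/-- A point: a rank-1 flat. -/
def IsPoint (M : Matroid α) (p : Set α) : Prop := M.IsFlat p ∧ rk M p = 1

/-- A line: a rank-2 flat. -/
def IsLine (M : Matroid α) (l : Set α) : Prop := M.IsFlat l ∧ rk M l = 2

/-- A plane: a rank-3 flat. -/
def IsPlane (M : Matroid α) (e : Set α) : Prop := M.IsFlat e ∧ rk M e = 3

/-- Two lines are coplanar if their join has rank at most 3. -/
def Coplanar (M : Matroid α) (l₁ l₂ : Set α) : Prop := rk M (l₁ ∪ l₂) ≤ 3

/-- A hyperplane: a maximal proper flat. -/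
def IsHyperplane (M : Matroid α) (H : Set α) : Prop :=
  M.IsFlat H ∧ H ≠ M.E ∧ ∀ F, M.IsFlat F → H ⊂ F → F = M.E

/-- A matroid is hypermodular if every pair of hyperplanes is a modular pair. -/
def Hypermodular (M : Matroid α) : Prop :=
  ∀ H₁ H₂, IsHyperplane M H₁ → IsHyperplane M H₂ → ModularPair M H₁ H₂

/-- A matroid is modular if every pair of flats is a modular pair. -/
def Modular (M : Matroid α) : Prop :=
  ∀ F₁ F₂, M.IsFlat F₁ → M.IsFlat F₂ → ModularPair M F₁ F₂

/-- A modular cut: an up-closed family of flats closed under intersections of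
modular pairs. -/
def IsModularCut (M : Matroid α) (𝓜 : Set (Set α)) : Prop :=
  (∀ F ∈ 𝓜, M.IsFlat F) ∧
  (∀ F ∈ 𝓜, ∀ F', M.IsFlat F' → F ⊆ F' → F' ∈ 𝓜) ∧
  (∀ F₁ ∈ 𝓜, ∀ F₂ ∈ 𝓜, ModularPair M F₁ F₂ → F₁ ∩ F₂ ∈ 𝓜)

/-- The principal modular cut of a flat `F`. -/
def principalCut (M : Matroid α) (F : Set α) : Set (Set α) :=
  {G | M.IsFlat G ∧ F ⊆ G}

/-- The modular cut generated by a family of flats. -/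
def genCut (M : Matroid α) (A : Set (Set α)) : Set (Set α) :=
  ⋂₀ {𝓜 | IsModularCut M 𝓜 ∧ A ⊆ 𝓜}

/-- A non-modular pair of flats is intersectable if the modular cut it generates is
not the principal modular cut of its intersection. -/
def Intersectable (M : Matroid α) (X Y : Set α) : Prop :=
  genCut M {X, Y} ≠ principalCut M (X ∩ Y)

/-- A matroid is OTE (only trivially extendable) if every nonempty modular cut
is principal. -/
def OTE (M : Matroid α) : Prop :=
  ∀ 𝓜, IsModularCut M 𝓜 → 𝓜 ≠ ∅ → ∃ F, M.IsFlat F ∧ 𝓜 = principalCut M F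

/-- A matroid is sticky if every pair of extensions meeting exactly in its ground set
has an amalgam. -/
def Sticky (M : Matroid α) : Prop :=
  ∀ N₁ N₂ : Matroid α, IsExtension N₁ M → IsExtension N₂ M → N₁.E ∩ N₂.E = M.E →
    ∃ A : Matroid α, A.E = N₁.E ∪ N₂.E ∧ IsExtension A N₁ ∧ IsExtension A N₂

/-- The function `η` of the amalgam construction. -/
noncomputable def eta (M M₁ M₂ : Matroid α) (X : Set α) : ℤ :=
  rk M₁ (X ∩ M₁.E) + rk M₂ (X ∩ M₂.E) - rk M (X ∩ M.E)

/-- The function `ξ` of the amalgam construction. -/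
noncomputable def xi (M M₁ M₂ : Matroid α) (X : Set α) : ℤ :=
  sInf {n : ℤ | ∃ Y, X ⊆ Y ∧ Y ⊆ M₁.E ∪ M₂.E ∧ n = eta M M₁ M₂ Y}

/-- The lattice `𝓛(M₁,M₂)` of sets whose traces on both ground sets are flats. -/
def latticeL (M₁ M₂ : Matroid α) : Set (Set α) :=
  {X | X ⊆ M₁.E ∪ M₂.E ∧ M₁.IsFlat (X ∩ M₁.E) ∧ M₂.IsFlat (X ∩ M₂.E)}

/-!
Submodularity applied to the planes `l₁ ∪ l₃` and `l₂ ∪ l₃`, whose join has rank 4, shows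
that their meet has rank at most `3 + 3 - 4 = 2`. That meet contains the line `l₃` and the
point `p`, so adding `p` to the flat `l₃` does not raise its rank, hence `p ⊆ l₃`.
-/

lemma rk_eq_toNat_eRk (M : Matroid α) (X : Set α) : rk M X = (M.eRk X).toNat := by
  obtain ⟨I, hI⟩ := M.exists_isBasis' X
  have hsup : (⨆ J ∈ {J : Set α | M.Indep J ∧ J ⊆ X}, J.encard) = I.encard :=
    le_antisymm
      (iSup₂_le fun J hJ => (hJ.1.encard_le_eRk_of_subset hJ.2).trans hI.eRk_eq_encard.le)
      (le_iSup₂_of_le I ⟨hI.indep, hI.subset⟩ le_rfl)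
  rw [rk, hsup, hI.eRk_eq_encard]

section RankFinite

open Matroid

variable {M : Matroid α} [M.RankFinite]

lemma natCast_toNat_eRk (X : Set α) : ((M.eRk X).toNat : ℕ∞) = M.eRk X :=
  ENat.natCast_toNat (eRk_ne_top_iff.2 (RankFinite.isRkFinite X))

lemma rk_le_rk_iff {X Y : Set α} : rk M X ≤ rk M Y ↔ M.eRk X ≤ M.eRk Y := by
  rw [rk_eq_toNat_eRk, rk_eq_toNat_eRk, Nat.cast_le, ← Nat.cast_le (α := ℕ∞),
    natCast_toNat_eRk, natCast_toNat_eRk]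

lemma rk_mono {X Y : Set α} (h : X ⊆ Y) : rk M X ≤ rk M Y :=
  rk_le_rk_iff.2 (M.eRk_mono h)

lemma rk_union_add_rk_inter_le (X Y : Set α) :
    rk M (X ∪ Y) + rk M (X ∩ Y) ≤ rk M X + rk M Y := by
  have h := M.eRk_inter_add_eRk_union_le X Y
  rw [← natCast_toNat_eRk X, ← natCast_toNat_eRk Y, ← natCast_toNat_eRk (X ∩ Y),
    ← natCast_toNat_eRk (X ∪ Y)] at h
  norm_cast at h
  simp only [rk_eq_toNat_eRk]
  omega

lemma _root_.Matroid.IsFlat.subset_of_rk_union_le {F P : Set α} (hF : M.IsFlat F)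
    (hP : P ⊆ M.E) (h : rk M (F ∪ P) ≤ rk M F) : P ⊆ F := by
  have hcl : M.closure F = M.closure (F ∪ P) :=
    (RankFinite.isRkFinite F).closure_eq_closure_of_subset_of_eRk_ge_eRk subset_union_left
      (rk_le_rk_iff.1 h)
  calc P ⊆ M.closure (F ∪ P) :=
        subset_union_right.trans (M.subset_closure _ (union_subset hF.subset_ground hP))
    _ = F := by rw [← hcl, hF.closure]

end RankFinite

theorem escher_general (M : Matroid α) [M.RankFinite] (l₁ l₂ l₃ p : Set α)
    (h₃ : IsLine M l₃)
    (h₁₃ : Coplanar M l₁ l₃) (h₂₃ : Coplanar M l₂ l₃)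
    (hspan : rk M (l₁ ∪ l₂ ∪ l₃) = 4)
    (hp : IsPoint M p) (hp₁ : p ⊆ l₁) (hp₂ : p ⊆ l₂) :
    p ⊆ l₃ := by
  have hmeet : rk M ((l₁ ∪ l₃) ∩ (l₂ ∪ l₃)) ≤ 2 := by
    have hsubmod := rk_union_add_rk_inter_le (M := M) (l₁ ∪ l₃) (l₂ ∪ l₃)
    rw [← union_union_distrib_right, hspan] at hsubmod
    linarith [show rk M (l₁ ∪ l₃) ≤ 3 from h₁₃, show rk M (l₂ ∪ l₃) ≤ 3 from h₂₃]
  have hsub : l₃ ∪ p ⊆ (l₁ ∪ l₃) ∩ (l₂ ∪ l₃) :=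
    union_subset (subset_inter subset_union_right subset_union_right)
      (subset_inter (hp₁.trans subset_union_left) (hp₂.trans subset_union_left))
  refine h₃.1.subset_of_rk_union_le hp.1.subset_ground ?_
  rw [h₃.2]
  exact (rk_mono hsub).trans hmeet

/-- the Escher configuration is impossible. -/
theorem escher (M : Matroid α) [M.RankFinite] (l₁ l₂ l₃ p : Set α)
    (h₁ : IsLine M l₁) (h₂ : IsLine M l₂) (h₃ : IsLine M l₃)
    (h₁₂ : Coplanar M l₁ l₂) (h₁₃ : Coplanar M l₁ l₃) (h₂₃ : Coplanar M l₂ l₃)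
    (hspan : rk M (l₁ ∪ l₂ ∪ l₃) = 4)
    (hp : IsPoint M p) (hp₁ : p ⊆ l₁) (hp₂ : p ⊆ l₂) :
    p ⊆ l₃ :=
  escher_general M l₁ l₂ l₃ p h₃ h₁₃ h₂₃ hspan hp hp₁ hp₂

end StickyKantor
end

section
/- Let M be a matroid, (X,Y) a non-modular pair of flats, and suppose there exists a point p in the ground set of M outside cl(X ∪ Y). Set Y₁ = cl(Y ∪ {p}). Then X ∩ Y = X ∩ Y₁ and δ(X, Y₁) = δ(X, Y). -/
/-!
Since `p` lies outside `cl(X ∪ Y) ⊇ cl(Y)`, adding it raises both `rk Y` and `rk (X ∪ Y)` by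
one. The intersection with `X` does not grow: a point of `X` spanned by `Y ∪ {p}` but not by
the flat `Y` would, by the exchange property, put `p` in `cl(X ∪ Y)`.
-/

open Set

namespace StickyKantor

variable {α : Type*}

lemma iSup_encard_indep_subset_eq_eRk (M : Matroid α) (X : Set α) :
    ⨆ I ∈ {I : Set α | M.Indep I ∧ I ⊆ X}, I.encard = M.eRk X := by
  refine le_antisymm (iSup₂_le fun I hI ↦ hI.1.encard_le_eRk_of_subset hI.2) ?_
  obtain ⟨I, hI⟩ := M.exists_isBasis' X
  rw [← hI.encard_eq_eRk]
  exact le_iSup₂ (f := fun (J : Set α) (_ : J ∈ {J : Set α | M.Indep J ∧ J ⊆ X}) ↦ J.encard)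
    I ⟨hI.indep, hI.subset⟩

lemma rk_closure_eq (M : Matroid α) (X : Set α) : rk M (M.closure X) = rk M X := by
  rw [rk_eq_toNat_eRk, rk_eq_toNat_eRk, Matroid.eRk_closure_eq]

lemma rk_union_closure_right_eq (M : Matroid α) (X Y : Set α) :
    rk M (X ∪ M.closure Y) = rk M (X ∪ Y) := by
  rw [rk_eq_toNat_eRk, rk_eq_toNat_eRk, Matroid.eRk_union_closure_right_eq]

lemma rk_insert_eq_add_one {M : Matroid α} [M.RankFinite] {X : Set α} {e : α}
    (he : e ∈ M.E \ M.closure X) : rk M (insert e X) = rk M X + 1 := by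
  rw [rk_eq_toNat_eRk, rk_eq_toNat_eRk, Matroid.eRk_insert_eq_add_one he,
    ENat.toNat_add (M.isRkFinite_set X).eRk_lt_top.ne ENat.one_ne_top]
  simp

lemma _root_.Matroid.IsFlat.inter_closure_insert_eq {M : Matroid α} {X Y : Set α} {p : α}
    (hY : M.IsFlat Y) (hp : p ∉ M.closure (X ∪ Y)) : X ∩ M.closure (insert p Y) = X ∩ Y := by
  refine subset_antisymm (fun x ⟨hxX, hxcl⟩ ↦ ⟨hxX, by_contra fun hxY ↦ hp ?_⟩)
    (inter_subset_inter_right _ (M.subset_closure_of_subset' (subset_insert p Y)))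
  have hpx := Matroid.closure_exchange ⟨hxcl, by rwa [hY.closure]⟩
  exact M.closure_mono (insert_subset (Or.inl hxX) subset_union_right) hpx.1

lemma mdefect_closure_insert_eq {M : Matroid α} [M.RankFinite] {X Y : Set α} {p : α}
    (hY : M.IsFlat Y) (hp : p ∈ M.E \ M.closure (X ∪ Y)) :
    mdefect M X (M.closure (insert p Y)) = mdefect M X Y := by
  have hpY : p ∈ M.E \ M.closure Y := ⟨hp.1, fun h ↦ hp.2 (M.closure_mono subset_union_right h)⟩
  have hY₁ : rk M (M.closure (insert p Y)) = rk M Y + 1 := by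
    rw [rk_closure_eq, rk_insert_eq_add_one hpY]
  have hXY₁ : rk M (X ∪ M.closure (insert p Y)) = rk M (X ∪ Y) + 1 := by
    rw [rk_union_closure_right_eq, union_insert, rk_insert_eq_add_one hp]
  rw [mdefect, mdefect, hY₁, hXY₁, hY.inter_closure_insert_eq hp.2]
  ring

theorem defect_invariant_point_outside_general (M : Matroid α) [M.RankFinite]
    (X Y : Set α) (hY : M.IsFlat Y)
    (p : α) (hp : p ∈ M.E \ M.closure (X ∪ Y)) :
    X ∩ Y = X ∩ M.closure (Y ∪ {p}) ∧
      mdefect M X (M.closure (Y ∪ {p})) = mdefect M X Y := by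
  rw [union_singleton]
  exact ⟨(hY.inter_closure_insert_eq hp.2).symm, mdefect_closure_insert_eq hY hp⟩

/-- enlarging `Y` by a point outside `cl(X ∪ Y)` preserves the
intersection with `X` and the modular defect. -/
theorem defect_invariant_point_outside (M : Matroid α) [M.RankFinite]
    (X Y : Set α) (hX : M.IsFlat X) (hY : M.IsFlat Y) (hnm : 0 < mdefect M X Y)
    (p : α) (hp : p ∈ M.E \ M.closure (X ∪ Y)) :
    X ∩ Y = X ∩ M.closure (Y ∪ {p}) ∧
      mdefect M X (M.closure (Y ∪ {p})) = mdefect M X Y :=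
  defect_invariant_point_outside_general M X Y hY p hp
end StickyKantor
end

section
/- Let M be a matroid and (H₁, H₂) a non-modular pair of hyperplanes. Then the modular cut generated by H₁ and H₂ consists exactly of {H₁, H₂, E(M)} and in particular is not a principal modular cut; hence (H₁, H₂) is intersectable. -/
open Set

namespace StickyKantor

variable {α : Type*}

/-! A modular cut containing two distinct hyperplanes contains `E`, and any flat above a
hyperplane is that hyperplane or `E`; so `{H₁, H₂, E}` is up-closed, and it is closed under
modular intersections exactly because `(H₁, H₂)` is not a modular pair. It is not principal,
since no member lies in both hyperplanes. -/

lemma ModularPair.symm {M : Matroid α} {X Y : Set α} (h : ModularPair M X Y) :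
    ModularPair M Y X := by
  unfold ModularPair at *
  rw [union_comm, inter_comm]
  omega

lemma not_modularPair_of_mdefect_pos {M : Matroid α} {X Y : Set α}
    (h : 0 < mdefect M X Y) : ¬ ModularPair M X Y := by
  unfold ModularPair
  unfold mdefect at h
  omega

lemma ne_of_mdefect_pos {M : Matroid α} {X Y : Set α} (h : 0 < mdefect M X Y) : X ≠ Y := by
  rintro rfl
  exact not_modularPair_of_mdefect_pos h (by simp [ModularPair])

lemma isFlat_inter {M : Matroid α} {F₁ F₂ : Set α} (h₁ : M.IsFlat F₁) (h₂ : M.IsFlat F₂) :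
    M.IsFlat (F₁ ∩ F₂) := by
  rw [inter_eq_iInter]
  exact Matroid.IsFlat.iInter fun b ↦ by cases b <;> assumption

namespace IsHyperplane

variable {M : Matroid α} {H F : Set α}

lemma eq_or_eq_ground_of_subset (hH : IsHyperplane M H) (hF : M.IsFlat F) (hHF : H ⊆ F) :
    F = H ∨ F = M.E := by
  rcases eq_or_ne H F with rfl | hne
  · exact Or.inl rfl
  · exact Or.inr (hH.2.2 F hF (hHF.ssubset_of_ne hne))

lemma eq_of_subset {H' : Set α} (hH : IsHyperplane M H) (hH' : IsHyperplane M H')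
    (hHH' : H ⊆ H') : H = H' :=
  ((hH.eq_or_eq_ground_of_subset hH'.1 hHH').resolve_right hH'.2.1).symm

end IsHyperplane

lemma IsModularCut.ground_mem {M : Matroid α} {𝓜 : Set (Set α)} (h𝓜 : IsModularCut M 𝓜)
    {F : Set α} (hF : F ∈ 𝓜) : M.E ∈ 𝓜 :=
  h𝓜.2.1 F hF M.E M.ground_isFlat (h𝓜.1 F hF).subset_ground

lemma genCut_subset {M : Matroid α} {A 𝓜 : Set (Set α)} (h𝓜 : IsModularCut M 𝓜)
    (hA : A ⊆ 𝓜) : genCut M A ⊆ 𝓜 :=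
  sInter_subset_of_mem ⟨h𝓜, hA⟩

lemma mem_genCut_iff {M : Matroid α} {A : Set (Set α)} {F : Set α} :
    F ∈ genCut M A ↔ ∀ 𝓜, IsModularCut M 𝓜 → A ⊆ 𝓜 → F ∈ 𝓜 := by
  simp [genCut, and_imp]

section HyperplanePair

variable {M : Matroid α} {H₁ H₂ : Set α}

lemma isModularCut_hyperplane_pair (h₁ : IsHyperplane M H₁) (h₂ : IsHyperplane M H₂)
    (hnm : ¬ ModularPair M H₁ H₂) : IsModularCut M {H₁, H₂, M.E} := by
  have hE₁ : H₁ ⊆ M.E := h₁.1.subset_ground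
  have hE₂ : H₂ ⊆ M.E := h₂.1.subset_ground
  refine ⟨?flat, ?upper, ?modular⟩
  case flat =>
    rintro F (rfl | rfl | rfl)
    exacts [h₁.1, h₂.1, M.ground_isFlat]
  case upper =>
    rintro F (rfl | rfl | rfl) F' hF' hFF'
    · rcases h₁.eq_or_eq_ground_of_subset hF' hFF' with rfl | rfl <;> simp
    · rcases h₂.eq_or_eq_ground_of_subset hF' hFF' with rfl | rfl <;> simp
    · simp [hFF'.antisymm hF'.subset_ground]
  case modular =>
    rintro F₁ (rfl | rfl | rfl) F₂ (rfl | rfl | rfl) hmp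
    · simp
    · exact absurd hmp hnm
    · simp [inter_eq_left.mpr hE₁]
    · exact absurd hmp.symm hnm
    · simp
    · simp [inter_eq_left.mpr hE₂]
    · simp [inter_eq_right.mpr hE₁]
    · simp [inter_eq_right.mpr hE₂]
    · simp

lemma genCut_hyperplane_pair (h₁ : IsHyperplane M H₁) (h₂ : IsHyperplane M H₂)
    (hnm : ¬ ModularPair M H₁ H₂) : genCut M {H₁, H₂} = {H₁, H₂, M.E} := by
  refine (genCut_subset (isModularCut_hyperplane_pair h₁ h₂ hnm) ?_).antisymm ?_
  · rintro _ (rfl | rfl) <;> simp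
  · rintro F (rfl | rfl | rfl) <;> rw [mem_genCut_iff] <;> intro 𝓜 h𝓜 hA
    · exact hA (mem_insert _ _)
    · exact hA (mem_insert_of_mem _ rfl)
    · exact h𝓜.ground_mem (hA (mem_insert _ _))

lemma hyperplane_pair_ne_principalCut (h₁ : IsHyperplane M H₁) (h₂ : IsHyperplane M H₂)
    (hne : H₁ ≠ H₂) {F : Set α} (hF_flat : M.IsFlat F) : {H₁, H₂, M.E} ≠ principalCut M F := by
  intro hF
  have subset_of_mem : ∀ G ∈ ({H₁, H₂, M.E} : Set (Set α)), F ⊆ G := fun G hG ↦ (hF ▸ hG).2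
  have hF₁ := subset_of_mem H₁ (mem_insert _ _)
  have hF₂ := subset_of_mem H₂ (mem_insert_of_mem _ (mem_insert _ _))
  have hFmem : F ∈ ({H₁, H₂, M.E} : Set (Set α)) := hF ▸ ⟨hF_flat, Subset.rfl⟩
  rcases hFmem with rfl | rfl | rfl
  · exact hne (h₁.eq_of_subset h₂ hF₂)
  · exact hne (h₂.eq_of_subset h₁ hF₁).symm
  · exact h₁.2.1 (h₁.1.subset_ground.antisymm hF₁)

end HyperplanePair

theorem nonmodular_hyperplane_pair_intersectable_general (M : Matroid α)
    (H₁ H₂ : Set α) (h₁ : IsHyperplane M H₁) (h₂ : IsHyperplane M H₂)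
    (hnm : 0 < mdefect M H₁ H₂) :
    genCut M {H₁, H₂} = {H₁, H₂, M.E} ∧
      (¬ ∃ F, M.IsFlat F ∧ genCut M {H₁, H₂} = principalCut M F) ∧
      Intersectable M H₁ H₂ := by
  have hgen := genCut_hyperplane_pair h₁ h₂ (not_modularPair_of_mdefect_pos hnm)
  have hnot_principal : ¬ ∃ F, M.IsFlat F ∧ genCut M {H₁, H₂} = principalCut M F := by
    rintro ⟨F, hF_flat, hF⟩
    exact hyperplane_pair_ne_principalCut h₁ h₂ (ne_of_mdefect_pos hnm) hF_flat (hgen ▸ hF)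
  exact ⟨hgen, hnot_principal, fun h ↦ hnot_principal ⟨_, isFlat_inter h₁.1 h₂.1, h⟩⟩

/-- the modular cut generated by a non-modular pair of hyperplanes is
`{H₁, H₂, E}`, which is not principal; hence the pair is intersectable. -/
theorem nonmodular_hyperplane_pair_intersectable (M : Matroid α) [M.RankFinite]
    (H₁ H₂ : Set α) (h₁ : IsHyperplane M H₁) (h₂ : IsHyperplane M H₂)
    (hnm : 0 < mdefect M H₁ H₂) :
    genCut M {H₁, H₂} = {H₁, H₂, M.E} ∧
      (¬ ∃ F, M.IsFlat F ∧ genCut M {H₁, H₂} = principalCut M F) ∧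
      Intersectable M H₁ H₂ :=
  nonmodular_hyperplane_pair_intersectable_general M H₁ H₂ h₁ h₂ hnm

end StickyKantor
end
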